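/- arXiv:1301.2643 — 6 statements merged into one kernel-verified Lean document; each statement's English description precedes it below -/
import Mathlib

section
/- For 1 < ν < 2 and m ≥ 3, the coefficient g_m^ν = (m+1)^{3-ν} - 4m^{3-ν} + 6(m-1)^{3-ν} - 4(m-2)^{3-ν} + (m-3)^{3-ν} is positive. -/
/-!
Write `a = 3 - ν ∈ (1, 2)` and `Δ² f (x) = f (x + 1) - 2 f x + f (x - 1)`. Then
`g ν m = Δ² (Δ² (· ^ a)) (m - 1)`, and a strictly convex function has positive second differences.
So it suffices that `Δ² (· ^ a)` is strictly convex on `[1, ∞)`: its second derivative is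
`a (a - 1) Δ² (· ^ (a - 2))`, which is positive because `x ↦ x ^ (a - 2)` is strictly convex on
`(0, ∞)` for the negative exponent `a - 2`.
-/

noncomputable def g (ν : ℝ) : ℕ → ℝ
  | 0 => 1
  | 1 => -4 + (2:ℝ) ^ (3 - ν)
  | 2 => 6 - (2:ℝ) ^ (5 - ν) + (3:ℝ) ^ (3 - ν)
  | m => ((m:ℝ) + 1) ^ (3 - ν) - 4 * (m:ℝ) ^ (3 - ν) + 6 * ((m:ℝ) - 1) ^ (3 - ν)
        - 4 * ((m:ℝ) - 2) ^ (3 - ν) + ((m:ℝ) - 3) ^ (3 - ν)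

open Set

lemma strictConvexOn_of_hasDerivAt2_pos {D : Set ℝ} (hD : Convex ℝ D) {f f' f'' : ℝ → ℝ}
    (hf : ContinuousOn f D) (hf' : ∀ x ∈ interior D, HasDerivAt f (f' x) x)
    (hf'' : ∀ x ∈ interior D, HasDerivAt f' (f'' x) x) (hf''₀ : ∀ x ∈ interior D, 0 < f'' x) :
    StrictConvexOn ℝ D f := by
  refine strictConvexOn_of_deriv2_pos hD hf fun x hx ↦ ?_
  have hderiv : deriv f =ᶠ[nhds x] f' :=
    Filter.eventually_of_mem (isOpen_interior.mem_nhds hx) fun y hy ↦ (hf' y hy).deriv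
  rw [Function.iterate_succ_apply, Function.iterate_one, hderiv.deriv_eq, (hf'' x hx).deriv]
  exact hf''₀ x hx

lemma strictConvexOn_rpow_of_neg {p : ℝ} (hp : p < 0) :
    StrictConvexOn ℝ (Ioi 0) fun x : ℝ ↦ x ^ p := by
  refine strictConvexOn_of_deriv2_pos (convex_Ioi 0)
    (continuousOn_id.rpow_const fun x hx ↦ Or.inl (ne_of_gt hx)) fun x hx ↦ ?_
  rw [interior_Ioi] at hx
  simp only [Real.iter_deriv_rpow_const, descPochhammer_succ_right, descPochhammer_zero,
    Nat.cast_zero, Nat.cast_one, Nat.cast_ofNat, sub_zero, one_mul, Polynomial.eval_mul,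
    Polynomial.eval_X, Polynomial.eval_sub, Polynomial.eval_one]
  exact mul_pos (mul_pos_of_neg_of_neg hp (by linarith)) (Real.rpow_pos_of_pos hx _)

def centralDiff2 (f : ℝ → ℝ) (x : ℝ) : ℝ := f (x + 1) - 2 * f x + f (x - 1)

lemma centralDiff2_centralDiff2 (f : ℝ → ℝ) (x : ℝ) :
    centralDiff2 (centralDiff2 f) x
      = f (x + 2) - 4 * f (x + 1) + 6 * f x - 4 * f (x - 1) + f (x - 2) := by
  simp only [centralDiff2]
  ring_nf

lemma StrictConvexOn.centralDiff2_pos {s : Set ℝ} {f : ℝ → ℝ} (hf : StrictConvexOn ℝ s f)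
    {x : ℝ} (hl : x - 1 ∈ s) (hr : x + 1 ∈ s) : 0 < centralDiff2 f x := by
  have hmid := hf.2 hl hr (by linarith) one_half_pos one_half_pos (add_halves 1)
  simp only [smul_eq_mul, show (1 / 2 : ℝ) * (x - 1) + 1 / 2 * (x + 1) = x by ring] at hmid
  rw [centralDiff2]
  linarith

lemma HasDerivAt.centralDiff2 {f f' : ℝ → ℝ} {x : ℝ} (hl : HasDerivAt f (f' (x - 1)) (x - 1))
    (h : HasDerivAt f (f' x) x) (hr : HasDerivAt f (f' (x + 1)) (x + 1)) :
    HasDerivAt (centralDiff2 f) (centralDiff2 f' x) x :=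
  ((hr.comp_add_const x 1).sub (h.const_mul 2)).add (hl.comp_sub_const x 1)

lemma strictConvexOn_centralDiff2_rpow {a : ℝ} (ha₁ : 1 < a) (ha₂ : a < 2) :
    StrictConvexOn ℝ (Ici 1) (centralDiff2 fun x ↦ x ^ a) := by
  have hpow (p : ℝ) {y : ℝ} (hy : 0 < y) : HasDerivAt (fun x : ℝ ↦ x ^ p) (p * y ^ (p - 1)) y :=
    Real.hasDerivAt_rpow_const (Or.inl hy.ne')
  refine strictConvexOn_of_hasDerivAt2_pos (convex_Ici 1)
    (f' := centralDiff2 fun y ↦ a * y ^ (a - 1))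
    (f'' := fun x ↦ a * (a - 1) * centralDiff2 (fun y ↦ y ^ (a - 2)) x) ?_ ?_ ?_ ?_
  · have := Real.continuous_rpow_const (q := a) (by linarith)
    unfold centralDiff2
    fun_prop
  all_goals rw [interior_Ici]; intro x (hx : 1 < x)
  · exact HasDerivAt.centralDiff2 (hpow a (by linarith)) (hpow a (by linarith))
      (hpow a (by linarith))
  · refine (HasDerivAt.centralDiff2 (f' := fun y ↦ a * ((a - 1) * y ^ (a - 1 - 1)))
      ((hpow (a - 1) (by linarith)).const_mul a) ((hpow (a - 1) (by linarith)).const_mul a)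
      ((hpow (a - 1) (by linarith)).const_mul a)).congr_deriv ?_
    simp only [centralDiff2, sub_sub, one_add_one_eq_two]
    ring
  · exact mul_pos (mul_pos (by linarith) (by linarith))
      ((strictConvexOn_rpow_of_neg (by linarith)).centralDiff2_pos (by simp; linarith)
        (by simp; linarith))

theorem stmt1 (ν : ℝ) (hν1 : 1 < ν) (hν2 : ν < 2) (m : ℕ) (hm : 3 ≤ m) :
    0 < g ν m := by
  obtain ⟨n, rfl⟩ : ∃ n, m = n + 3 := ⟨m - 3, by omega⟩
  have hn : (0 : ℝ) ≤ n := n.cast_nonneg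
  have key := (strictConvexOn_centralDiff2_rpow (a := 3 - ν) (by linarith) (by linarith))
    |>.centralDiff2_pos (x := n + 2) (by simp; linarith) (by simp; linarith)
  rw [centralDiff2_centralDiff2] at key
  convert key using 1
  simp only [g]
  push_cast
  ring_nf
end

section
/- For 1 < ν < 2, the inequality g_0^ν + g_2^ν < -g_1^ν < (5/2)(g_0^ν + g_2^ν) holds, where g_0^ν = 1, g_1^ν = -4 + 2^{3-ν}, and g_2^ν = 6 - 2^{5-ν} + 3^{3-ν}. -/
open Real

lemma twelve_mul_lt_nine_add_five_mul {x y : ℝ} (hx : 0 < x) (hy : 0 < y)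
    (hconc : 3 * x ^ 3 + x ^ 2 * y ≤ 4 * y ^ 2) (hyx : 2 * y < 3 * x) :
    12 * x < 9 + 5 * y := by
  have hpos : 0 < x ^ 2 * (3 * x + y) := by positivity
  have key : (12 * x - 5 * y) * (x ^ 2 * (3 * x + y)) < 9 * (x ^ 2 * (3 * x + y)) :=
    calc (12 * x - 5 * y) * (x ^ 2 * (3 * x + y))
        ≤ (12 * x - 5 * y) * (4 * y ^ 2) :=
          mul_le_mul_of_nonneg_left (by linarith) (by linarith)
      _ < 9 * (x ^ 2 * (3 * x + y)) := by
          linear_combination mul_pos (pow_pos (sub_pos.2 hyx) 2) (by positivity : 0 < 3 * x + 5 * y)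
  linarith [lt_of_mul_lt_mul_right key hpos.le]

section RpowConcavity

variable {s : ℝ}

lemma one_add_three_rpow_lt (hs0 : 0 < s) (hs1 : s < 1) : 1 + (3 : ℝ) ^ s < 2 * 2 ^ s := by
  have h := (strictConcaveOn_rpow hs0 hs1).2 (show (1 : ℝ) ∈ Set.Ici 0 by norm_num)
    (show (3 : ℝ) ∈ Set.Ici 0 by norm_num) (by norm_num) (by norm_num : (0 : ℝ) < 1 / 2)
    (by norm_num : (0 : ℝ) < 1 / 2) (by norm_num)
  norm_num [smul_eq_mul] at h
  linarith

lemma three_mul_eight_rpow_add_twelve_rpow_le (hs0 : 0 ≤ s) (hs1 : s ≤ 1) :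
    3 * (8 : ℝ) ^ s + 12 ^ s ≤ 4 * 9 ^ s := by
  have h := (concaveOn_rpow hs0 hs1).2 (show (8 : ℝ) ∈ Set.Ici 0 by norm_num)
    (show (12 : ℝ) ∈ Set.Ici 0 by norm_num) (by norm_num : (0 : ℝ) ≤ 3 / 4)
    (by norm_num : (0 : ℝ) ≤ 1 / 4) (by norm_num)
  norm_num [smul_eq_mul] at h
  linarith

lemma two_mul_three_rpow_lt (hs : s < 1) : 2 * (3 : ℝ) ^ s < 3 * 2 ^ s := by
  have h : ((3 : ℝ) / 2) ^ s < 3 / 2 := rpow_lt_self_of_one_lt (by norm_num) hs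
  rw [div_rpow (by norm_num) (by norm_num), div_lt_iff₀ (by positivity)] at h
  linarith

lemma twelve_mul_two_rpow_lt (hs0 : 0 ≤ s) (hs1 : s < 1) :
    12 * (2 : ℝ) ^ s < 9 + 5 * 3 ^ s := by
  have hconc := three_mul_eight_rpow_add_twelve_rpow_le hs0 hs1.le
  rw [show (8 : ℝ) = 2 * 2 * 2 by norm_num, show (12 : ℝ) = 2 * 2 * 3 by norm_num,
    show (9 : ℝ) = 3 * 3 by norm_num] at hconc
  simp only [mul_rpow (by positivity : (0 : ℝ) ≤ 2 * 2) (by norm_num : (0 : ℝ) ≤ 2),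
    mul_rpow (by positivity : (0 : ℝ) ≤ 2 * 2) (by norm_num : (0 : ℝ) ≤ 3),
    mul_rpow (by norm_num : (0 : ℝ) ≤ 2) (by norm_num : (0 : ℝ) ≤ 2),
    mul_rpow (by norm_num : (0 : ℝ) ≤ 3) (by norm_num : (0 : ℝ) ≤ 3)] at hconc
  exact twelve_mul_lt_nine_add_five_mul (by positivity) (by positivity) (by linarith)
    (two_mul_three_rpow_lt hs1)

end RpowConcavity

lemma rpow_add_nat_sub {x : ℝ} (hx : 0 < x) (n : ℕ) (ν : ℝ) :
    x ^ (n + 2 - ν) = x ^ n * x ^ (2 - ν) := by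
  rw [show (n : ℝ) + 2 - ν = n + (2 - ν) by ring, rpow_add hx, rpow_natCast]

lemma g_zero_add_g_two (ν : ℝ) : g ν 0 + g ν 2 = 7 - 8 * (2 : ℝ) ^ (2 - ν) + 3 * 3 ^ (2 - ν) := by
  have h2 := rpow_add_nat_sub (by norm_num : (0 : ℝ) < 2) 3 ν
  have h3 := rpow_add_nat_sub (by norm_num : (0 : ℝ) < 3) 1 ν
  norm_num at h2 h3
  simp only [g, h2, h3]
  ring

lemma neg_g_one (ν : ℝ) : -g ν 1 = 4 - 2 * (2 : ℝ) ^ (2 - ν) := by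
  have h2 := rpow_add_nat_sub (by norm_num : (0 : ℝ) < 2) 1 ν
  norm_num at h2
  simp only [g, h2]
  ring

theorem stmt2 (ν : ℝ) (hν1 : 1 < ν) (hν2 : ν < 2) :
    g ν 0 + g ν 2 < -(g ν 1) ∧ -(g ν 1) < (5/2) * (g ν 0 + g ν 2) := by
  have hmid := one_add_three_rpow_lt (s := 2 - ν) (by linarith) (by linarith)
  have hsharp := twelve_mul_two_rpow_lt (s := 2 - ν) (by linarith) (by linarith)
  rw [g_zero_add_g_two, neg_g_one]
  constructor <;> linarith
end

section
/- For 1 < ν < 2, the sum g_0^ν + g_2^ν = 7 - 2^{5-ν} + 3^{3-ν} is positive. -/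
open Real

lemma one_le_logb_two_three : 1 ≤ logb 2 3 :=
  (le_logb_iff_rpow_le (by norm_num) (by norm_num)).2 (by norm_num)

lemma logb_two_three_lt : logb 2 3 < 16 / 9 := by
  have h := log_lt_log (by norm_num) (show (3 : ℝ) ^ 9 < 2 ^ 16 by norm_num)
  rw [log_pow, log_pow] at h
  rw [logb, div_lt_iff₀ (log_pos (by norm_num))]
  push_cast at h
  linarith

lemma three_rpow_eq_two_rpow_rpow_logb (b : ℝ) : (3 : ℝ) ^ b = ((2 : ℝ) ^ b) ^ logb 2 3 := by
  rw [← rpow_mul (by norm_num), mul_comm, rpow_mul (by norm_num),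
    rpow_logb (by norm_num) (by norm_num) (by norm_num)]

lemma mul_sub_le_sub_add_rpow {y a : ℝ} (hy : 0 ≤ y) (ha : 1 ≤ a) :
    (1 - y) * (16 - 9 * a) ≤ 7 - 16 * y + 9 * y ^ a := by
  have bernoulli := one_add_mul_self_le_rpow_one_add (s := y - 1) (by linarith) ha
  rw [add_sub_cancel] at bernoulli
  linarith

theorem stmt3_general (ν : ℝ) (hν1 : 1 < ν) :
    0 < g ν 0 + g ν 2 ∧ g ν 0 + g ν 2 = 7 - (2:ℝ) ^ (5 - ν) + (3:ℝ) ^ (3 - ν) := by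
  have hsum : g ν 0 + g ν 2 = 7 - (2:ℝ) ^ (5 - ν) + (3:ℝ) ^ (3 - ν) := by
    simp only [g]; ring
  refine ⟨?_, hsum⟩
  have h2 : (2 : ℝ) ^ (5 - ν) = 16 * 2 ^ (1 - ν) := by
    rw [show 5 - ν = 4 + (1 - ν) by ring, rpow_add (by norm_num)]; norm_num
  have h3 : (3 : ℝ) ^ (3 - ν) = 9 * ((2 : ℝ) ^ (1 - ν)) ^ logb 2 3 := by
    rw [show 3 - ν = 2 + (1 - ν) by ring, rpow_add (by norm_num),
      three_rpow_eq_two_rpow_rpow_logb (1 - ν)]; norm_num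
  set y := (2 : ℝ) ^ (1 - ν)
  have hy1 : y < 1 := rpow_lt_one_of_one_lt_of_neg (by norm_num) (by linarith)
  have hpos : 0 < (1 - y) * (16 - 9 * logb 2 3) :=
    mul_pos (by linarith) (by linarith [logb_two_three_lt])
  rw [hsum, h2, h3]
  linarith [mul_sub_le_sub_add_rpow (by positivity : 0 ≤ y) one_le_logb_two_three]

theorem stmt3 (ν : ℝ) (hν1 : 1 < ν) (hν2 : ν < 2) :
    0 < g ν 0 + g ν 2 ∧ g ν 0 + g ν 2 = 7 - (2:ℝ) ^ (5 - ν) + (3:ℝ) ^ (3 - ν) :=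
  stmt3_general ν hν1
end

section
/- Let A, B be commuting complex n×n matrices such that every eigenvalue of A and every eigenvalue of B has negative real part. Then the error iteration matrices M_A = (I-A)⁻¹(I+A) and M_B = (I-B)⁻¹(I+B) satisfy (M_A M_B)^k → 0 as k → ∞. -/
/-!
Let `c z = (1 - z)⁻¹ (1 + z)`. The double centralizer of `{A, B}` is a closed commutative
subalgebra that contains the inverse of each of its invertible elements, so spectra computed
in it agree with spectra in the full algebra. By Gelfand theory every point of the spectrum of
`c A * c B` is then `χ (c A) * χ (c B) = c α * c β` for a character `χ`, where `α = χ A` and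
`β = χ B` lie in the spectra of `A` and `B`. Since `Re z < 0` means `|1 + z| < |1 - z|`, the
spectral radius of `c A * c B` is below `1`, and Gelfand's formula makes its powers tend to `0`.
-/

open Filter Topology

-- `Ring.inverse` is `0` off the units, so this is `0` when `1 - x` is not invertible.
noncomputable def cayleyTransform {R : Type*} [Ring R] (x : R) : R :=
  Ring.inverse (1 - x) * (1 + x)

theorem norm_cayleyTransform_lt_one {z : ℂ} (hz : z.re < 0) : ‖cayleyTransform z‖ < 1 := by
  have hsq : ‖1 + z‖ ^ 2 < ‖1 - z‖ ^ 2 := by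
    simp only [Complex.sq_norm, Complex.normSq_apply, Complex.add_re, Complex.add_im,
      Complex.sub_re, Complex.sub_im, Complex.one_re, Complex.one_im]
    nlinarith
  have hlt : ‖1 + z‖ < ‖1 - z‖ := lt_of_pow_lt_pow_left₀ 2 (norm_nonneg _) hsq
  rw [cayleyTransform, Ring.inverse_eq_inv, norm_mul, norm_inv,
    inv_mul_lt_one₀ ((norm_nonneg _).trans_lt hlt)]
  exact hlt

theorem map_ringInverse_of_isUnit {M₀ G₀ F : Type*} [MonoidWithZero M₀] [GroupWithZero G₀]
    [FunLike F M₀ G₀] [MonoidHomClass F M₀ G₀] (f : F) {x : M₀} (hx : IsUnit x) :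
    f (Ring.inverse x) = (f x)⁻¹ :=
  eq_inv_of_mul_eq_one_left (by rw [← map_mul, Ring.inverse_mul_cancel x hx, map_one])

theorem map_cayleyTransform {R K F : Type*} [Ring R] [DivisionRing K] [FunLike F R K]
    [RingHomClass F R K] (f : F) {x : R} (hx : IsUnit (1 - x)) :
    f (cayleyTransform x) = cayleyTransform (f x) := by
  simp [cayleyTransform, map_ringInverse_of_isUnit f hx, Ring.inverse_eq_inv]

theorem isUnit_one_sub_of_one_notMem_spectrum {R A : Type*} [CommSemiring R] [Ring A]
    [Algebra R A] {a : A} (h : 1 ∉ spectrum R a) : IsUnit (1 - a) := by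
  simpa using spectrum.notMem_iff.mp h

theorem spectrum_cayleyTransform_mul_subset {A : Type*} [NormedCommRing A] [NormedAlgebra ℂ A]
    [CompleteSpace A] {a b : A} (ha : 1 ∉ spectrum ℂ a) (hb : 1 ∉ spectrum ℂ b) :
    spectrum ℂ (cayleyTransform a * cayleyTransform b) ⊆
      (fun p : ℂ × ℂ => cayleyTransform p.1 * cayleyTransform p.2) ''
        (spectrum ℂ a ×ˢ spectrum ℂ b) := by
  intro z hz
  obtain ⟨φ, rfl⟩ := WeakDual.CharacterSpace.mem_spectrum_iff_exists.mp hz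
  refine ⟨(φ a, φ b), ⟨AlgHom.apply_mem_spectrum φ a, 
    AlgHom.apply_mem_spectrum φ b⟩, ?_⟩
  rw [map_mul, map_cayleyTransform φ (isUnit_one_sub_of_one_notMem_spectrum ha),
    map_cayleyTransform φ (isUnit_one_sub_of_one_notMem_spectrum hb)]

namespace Subalgebra

variable {R A : Type*} [CommRing R] [Ring A] [Algebra R A] {s : Set A}

theorem ringInverse_mem_centralizer {x : A} (hx : x ∈ centralizer R s) :
    Ring.inverse x ∈ centralizer R s := by
  by_cases h : IsUnit x
  · rw [Ring.inverse_of_isUnit h, mem_centralizer_iff]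
    exact fun g hg =>
      (Commute.units_inv_right (u := h.unit) ((mem_centralizer_iff R).mp hx g hg)).eq
  · rw [Ring.inverse_non_unit x h]
    exact zero_mem _

theorem isUnit_coe_centralizer_iff {x : centralizer R s} : IsUnit (x : A) ↔ IsUnit x :=
  ⟨fun h => ⟨⟨x, ⟨_, ringInverse_mem_centralizer x.2⟩,
      Subtype.ext (Ring.mul_inverse_cancel _ h), Subtype.ext (Ring.inverse_mul_cancel _ h)⟩,
      rfl⟩,
    fun h => h.map (centralizer R s).val⟩

theorem spectrum_centralizer_eq (x : centralizer R s) :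
    spectrum R x = spectrum R (x : A) := by
  ext r
  rw [spectrum.mem_iff, spectrum.mem_iff, ← isUnit_coe_centralizer_iff]
  rfl

theorem coe_ringInverse_centralizer (x : centralizer R s) :
    ((Ring.inverse x : centralizer R s) : A) = Ring.inverse (x : A) := by
  by_cases h : IsUnit (x : A)
  · calc ((Ring.inverse x : centralizer R s) : A)
        = Ring.inverse (x : A) * ((x * Ring.inverse x : centralizer R s) : A) := by
          rw [Subalgebra.coe_mul, Ring.inverse_mul_cancel_left _ _ h]
      _ = Ring.inverse (x : A) := by
          rw [Ring.mul_inverse_cancel x (isUnit_coe_centralizer_iff.mp h), Subalgebra.coe_one,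
            mul_one]
  · rw [Ring.inverse_non_unit _ h, Ring.inverse_non_unit x (mt isUnit_coe_centralizer_iff.mpr h),
      Subalgebra.coe_zero]

theorem coe_cayleyTransform_centralizer (x : centralizer R s) :
    ((cayleyTransform x : centralizer R s) : A) = cayleyTransform (x : A) := by
  simp [cayleyTransform, coe_ringInverse_centralizer]

end Subalgebra

section BanachAlgebra

variable {A : Type*} [NormedRing A] [NormedAlgebra ℂ A] [CompleteSpace A]

theorem spectrum_cayleyTransform_mul_subset_of_commute {a b : A} (hab : Commute a b)
    (ha : 1 ∉ spectrum ℂ a) (hb : 1 ∉ spectrum ℂ b) :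
    spectrum ℂ (cayleyTransform a * cayleyTransform b) ⊆
      (fun p : ℂ × ℂ => cayleyTransform p.1 * cayleyTransform p.2) ''
        (spectrum ℂ a ×ˢ spectrum ℂ b) := by
  let S := Subalgebra.centralizer ℂ (Subalgebra.centralizer ℂ ({a, b} : Set A) : Set A)
  have hpair : ∀ x ∈ ({a, b} : Set A), ∀ y ∈ ({a, b} : Set A), x * y = y * x := by
    simp only [Set.mem_insert_iff, Set.mem_singleton_iff]
    rintro x (rfl | rfl) y (rfl | rfl)
    exacts [rfl, hab.eq, hab.eq.symm, rfl]
  let _ : NormedCommRing S :=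
    { (inferInstance : NormedRing S) with
      mul_comm := fun x y => Subtype.ext
        (Set.centralizer_centralizer_comm_of_comm hpair _ x.2 _ y.2) }
  have : CompleteSpace S := (Set.isClosed_centralizer _).completeSpace_coe
  let a' : S := ⟨a, Set.subset_centralizer_centralizer (by simp)⟩
  let b' : S := ⟨b, Set.subset_centralizer_centralizer (by simp)⟩
  have key := spectrum_cayleyTransform_mul_subset (a := a') (b := b')
    (by rwa [Subalgebra.spectrum_centralizer_eq]) (by rwa [Subalgebra.spectrum_centralizer_eq])
  rwa [Subalgebra.spectrum_centralizer_eq, Subalgebra.spectrum_centralizer_eq,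
    Subalgebra.spectrum_centralizer_eq, Subalgebra.coe_mul,
    Subalgebra.coe_cayleyTransform_centralizer, Subalgebra.coe_cayleyTransform_centralizer] at key

theorem tendsto_pow_atTop_nhds_zero_of_spectralRadius_lt_one {a : A}
    (h : spectralRadius ℂ a < 1) : Tendsto (fun k : ℕ => a ^ k) atTop (𝓝 0) := by
  obtain ⟨r, hr, hr1⟩ := ENNReal.lt_iff_exists_nnreal_btwn.mp h
  have hbound : ∀ᶠ k : ℕ in atTop, ‖a ^ k‖ ≤ (r : ℝ) ^ k := by
    filter_upwards [(spectrum.gelfand_formula a).eventually_lt_const hr,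
      eventually_ge_atTop 1] with k hk hk1
    have hkpos : (0 : ℝ) < k := by exact_mod_cast hk1
    have := ENNReal.rpow_lt_rpow hk hkpos
    rw [← ENNReal.rpow_mul, one_div, inv_mul_cancel₀ hkpos.ne', ENNReal.rpow_one,
      ENNReal.rpow_natCast, ← ENNReal.coe_pow, ENNReal.coe_lt_coe] at this
    exact_mod_cast this.le
  exact squeeze_zero_norm' hbound
    (tendsto_pow_atTop_nhds_zero_of_lt_one r.coe_nonneg (by exact_mod_cast hr1))

theorem tendsto_pow_cayleyTransform_mul_cayleyTransform {a b : A} (hab : Commute a b)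
    (ha : ∀ z ∈ spectrum ℂ a, z.re < 0) (hb : ∀ z ∈ spectrum ℂ b, z.re < 0) :
    Tendsto (fun k : ℕ => (cayleyTransform a * cayleyTransform b) ^ k) atTop (𝓝 0) := by
  rcases subsingleton_or_nontrivial A with _ | _
  · simp [Subsingleton.elim _ (0 : A)]
  have one_notMem {x : A} (hx : ∀ z ∈ spectrum ℂ x, z.re < 0) : 1 ∉ spectrum ℂ x :=
    fun h1 => (hx 1 h1).not_ge zero_le_one
  refine tendsto_pow_atTop_nhds_zero_of_spectralRadius_lt_one ?_
  simpa using spectrum.spectralRadius_lt_of_forall_lt (r := 1) _ fun z hz => by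
    obtain ⟨⟨α, β⟩, ⟨hα, hβ⟩, rfl⟩ :=
      spectrum_cayleyTransform_mul_subset_of_commute hab (one_notMem ha) (one_notMem hb) hz
    rw [← NNReal.coe_lt_coe, coe_nnnorm, norm_mul]
    exact mul_lt_one_of_nonneg_of_lt_one_left (norm_nonneg _)
      (norm_cayleyTransform_lt_one (ha α hα)) (norm_cayleyTransform_lt_one (hb β hβ)).le

end BanachAlgebra

-- Any submultiplicative norm inducing the usual topology would do.
attribute [local instance] Matrix.linftyOpNormedRing Matrix.linftyOpNormedAlgebra

theorem stmt9 (n : ℕ) (A B : Matrix (Fin n) (Fin n) ℂ)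
    (hcomm : A * B = B * A)
    (hA : ∀ μ ∈ spectrum ℂ A, μ.re < 0)
    (hB : ∀ μ ∈ spectrum ℂ B, μ.re < 0) :
    Filter.Tendsto
      (fun k : ℕ => (((1 - A)⁻¹ * (1 + A)) * ((1 - B)⁻¹ * (1 + B))) ^ k)
      Filter.atTop (nhds 0) := by
  simp only [Matrix.nonsing_inv_eq_ringInverse]
  exact tendsto_pow_cayleyTransform_mul_cayleyTransform hcomm hA hB
end

section
/- Let A be a real n×n symmetric positive definite matrix with diagonal part D, and let 0 < ω < 2/η₀ where η₀ ≥ ρ(D⁻¹A). Set S = I - ωD⁻¹A and σ = ω(2 - ωη₀). Then for every vector e, (A S e, S e) ≤ (A e, e) - σ (D⁻¹ A e, A e). -/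
/-!
With `g = D⁻¹ A e` we have `S e = e - ω g`, hence
`(A S e, S e) = (A e, e) - 2 ω (D⁻¹ A e, A e) + ω² (A g, g)`, and since `D g = A e` it suffices
to prove the generalized Rayleigh bound `(A g, g) ≤ η₀ (D g, g)`. Conjugating by `D^{1/2}` turns
`D⁻¹ A` into the symmetric matrix `D^{-1/2} A D^{-1/2}`, which has the same spectrum, so its
quadratic form is bounded by `η₀` times the squared norm; substituting `x = D^{1/2} g` gives the
bound.
-/

open Matrix

namespace Matrix

variable {ι : Type*} [Fintype ι]

lemma mem_spectrum_map [DecidableEq ι] {K L : Type*} [Field K] [Field L] (f : K →+* L)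
    {M : Matrix ι ι K} {μ : K} (hμ : μ ∈ spectrum K M) : f μ ∈ spectrum L (M.map f) := by
  rw [mem_spectrum_iff_isRoot_charpoly] at hμ ⊢
  rw [charpoly_map]
  exact hμ.map

lemma IsHermitian.mulVec_dotProduct_comm {A : Matrix ι ι ℝ} (hA : A.IsHermitian) (u v : ι → ℝ) :
    A *ᵥ u ⬝ᵥ v = A *ᵥ v ⬝ᵥ u := by
  rw [dotProduct_comm, dotProduct_mulVec, ← mulVec_transpose,
    ← conjTranspose_eq_transpose_of_trivial, hA.eq]

lemma IsHermitian.mulVec_sub_smul_dotProduct {A : Matrix ι ι ℝ} (hA : A.IsHermitian)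
    (e g : ι → ℝ) (ω : ℝ) :
    A *ᵥ (e - ω • g) ⬝ᵥ (e - ω • g)
      = A *ᵥ e ⬝ᵥ e - 2 * ω * (A *ᵥ e ⬝ᵥ g) + ω ^ 2 * (A *ᵥ g ⬝ᵥ g) := by
  simp only [mulVec_sub, mulVec_smul, sub_dotProduct, dotProduct_sub, smul_dotProduct,
    dotProduct_smul, smul_eq_mul, hA.mulVec_dotProduct_comm g e]
  ring

open scoped MatrixOrder in
lemma IsHermitian.dotProduct_mulVec_le_of_spectrum_le [DecidableEq ι] {M : Matrix ι ι ℝ}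
    (hM : M.IsHermitian) {η : ℝ} (h : ∀ μ ∈ spectrum ℝ M, μ ≤ η) (x : ι → ℝ) :
    M *ᵥ x ⬝ᵥ x ≤ η * (x ⬝ᵥ x) := by
  have hle : M ≤ algebraMap ℝ (Matrix ι ι ℝ) η := le_algebraMap_of_spectrum_le h hM
  simpa [Algebra.algebraMap_eq_smul_one, sub_mulVec, smul_mulVec, dotProduct_comm x] using
    (Matrix.le_iff.mp hle).dotProduct_mulVec_nonneg x

lemma IsHermitian.dotProduct_mulVec_le_of_spectrum_diagonal_inv_mul_le [DecidableEq ι]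
    {A : Matrix ι ι ℝ} (hA : A.IsHermitian) {d : ι → ℝ} (hd : ∀ i, 0 < d i) {η : ℝ}
    (h : ∀ μ ∈ spectrum ℝ ((diagonal d)⁻¹ * A), μ ≤ η) (x : ι → ℝ) :
    A *ᵥ x ⬝ᵥ x ≤ η * (diagonal d *ᵥ x ⬝ᵥ x) := by
  have hsq : ∀ i, √(d i) ≠ 0 := fun i => (Real.sqrt_pos.mpr (hd i)).ne'
  set E := diagonal fun i => √(d i)
  set F := diagonal fun i => (√(d i))⁻¹
  have hFE : F * E = 1 := by
    simp only [E, F, diagonal_mul_diagonal, ← diagonal_one]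
    congr; funext i; exact inv_mul_cancel₀ (hsq i)
  have hEF : E * F = 1 := by
    simp only [E, F, diagonal_mul_diagonal, ← diagonal_one]
    congr; funext i; exact mul_inv_cancel₀ (hsq i)
  have hFF : (diagonal d)⁻¹ = F * F := by
    refine inv_eq_left_inv ?_
    simp only [F, diagonal_mul_diagonal, ← diagonal_one]
    congr; funext i
    rw [← mul_inv, Real.mul_self_sqrt (hd i).le, inv_mul_cancel₀ (hd i).ne']
  have hM : (F * A * F).IsHermitian := by
    simpa [F] using isHermitian_conjTranspose_mul_mul F hA
  have hspec : spectrum ℝ ((diagonal d)⁻¹ * A) = spectrum ℝ (F * A * F) := by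
    have hconj : (diagonal d)⁻¹ * A = F * (F * A * F) * E := by
      rw [hFF]; simp only [Matrix.mul_assoc, hFE, Matrix.mul_one]
    rw [hconj]; exact spectrum.units_conjugate' (u := ⟨E, F, hEF, hFE⟩)
  have key := hM.dotProduct_mulVec_le_of_spectrum_le (hspec ▸ h) (E *ᵥ x)
  have hFE_dot : ∀ y, F *ᵥ y ⬝ᵥ E *ᵥ x = y ⬝ᵥ x := fun y => by
    simp only [F, E, mulVec_diagonal, dotProduct]
    refine Finset.sum_congr rfl fun i _ => ?_
    field_simp [hsq i]
  have hEE_dot : E *ᵥ x ⬝ᵥ E *ᵥ x = diagonal d *ᵥ x ⬝ᵥ x := by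
    simp only [E, mulVec_diagonal, dotProduct]
    refine Finset.sum_congr rfl fun i _ => ?_
    rw [mul_mul_mul_comm, Real.mul_self_sqrt (hd i).le, mul_assoc]
  have hMx : (F * A * F) *ᵥ E *ᵥ x = F *ᵥ A *ᵥ x := by
    rw [mulVec_mulVec, Matrix.mul_assoc, hFE, Matrix.mul_one, mulVec_mulVec]
  rwa [hMx, hFE_dot, hEE_dot] at key

end Matrix

open Matrix in

theorem stmt10_general (n : ℕ) (A : Matrix (Fin n) (Fin n) ℝ) (hA : A.PosDef)
    (D : Matrix (Fin n) (Fin n) ℝ) (hD : D = Matrix.diagonal fun i => A i i)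
    (η₀ ω : ℝ)
    (hη : ∀ μ ∈ spectrum ℂ ((D⁻¹ * A).map Complex.ofReal), ‖μ‖ ≤ η₀)
    (S : Matrix (Fin n) (Fin n) ℝ) (hS : S = 1 - ω • (D⁻¹ * A))
    (σ : ℝ) (hσ : σ = ω * (2 - ω * η₀)) :
    ∀ e : Fin n → ℝ,
      A.mulVec (S.mulVec e) ⬝ᵥ S.mulVec e
        ≤ A.mulVec e ⬝ᵥ e - σ * ((D⁻¹ * A).mulVec e ⬝ᵥ A.mulVec e) := by
  intro e
  subst hS hσ
  have hD_unit : IsUnit D.det := by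
    rw [← isUnit_iff_isUnit_det, hD, isUnit_diagonal]
    exact Pi.isUnit_iff.mpr fun _ => hA.diag_pos.ne'.isUnit
  have hspec : ∀ μ ∈ spectrum ℝ (D⁻¹ * A), μ ≤ η₀ := fun μ hμ =>
    (le_abs_self μ).trans (by simpa using hη _ (mem_spectrum_map Complex.ofRealHom hμ))
  have hRayleigh : ∀ x, A *ᵥ x ⬝ᵥ x ≤ η₀ * (D *ᵥ x ⬝ᵥ x) := by
    subst hD
    exact hA.isHermitian.dotProduct_mulVec_le_of_spectrum_diagonal_inv_mul_le
      (fun _ => hA.diag_pos) hspec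
  have hDg : D *ᵥ (D⁻¹ * A) *ᵥ e = A *ᵥ e := by
    rw [mulVec_mulVec, mul_nonsing_inv_cancel_left _ _ hD_unit]
  have hbound := hRayleigh ((D⁻¹ * A) *ᵥ e)
  rw [hDg] at hbound
  rw [sub_mulVec, one_mulVec, smul_mulVec, hA.isHermitian.mulVec_sub_smul_dotProduct,
    dotProduct_comm ((D⁻¹ * A) *ᵥ e)]
  linarith [mul_le_mul_of_nonneg_left hbound (sq_nonneg ω)]

open Matrix in
theorem stmt10 (n : ℕ) (A : Matrix (Fin n) (Fin n) ℝ) (hA : A.PosDef)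
    (D : Matrix (Fin n) (Fin n) ℝ) (hD : D = Matrix.diagonal fun i => A i i)
    (η₀ ω : ℝ)
    (hη : ∀ μ ∈ spectrum ℂ ((D⁻¹ * A).map Complex.ofReal), ‖μ‖ ≤ η₀)
    (hω0 : 0 < ω) (hω2 : ω < 2 / η₀)
    (S : Matrix (Fin n) (Fin n) ℝ) (hS : S = 1 - ω • (D⁻¹ * A))
    (σ : ℝ) (hσ : σ = ω * (2 - ω * η₀)) :
    ∀ e : Fin n → ℝ,
      A.mulVec (S.mulVec e) ⬝ᵥ S.mulVec e
        ≤ A.mulVec e ⬝ᵥ e - σ * ((D⁻¹ * A).mulVec e ⬝ᵥ A.mulVec e) :=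
  stmt10_general n A hA D hD η₀ ω hη S hS σ hσ
end

section
/- Let N be even, e ∈ ℝ^{N-1} with e_0 = e_N = 0 (boundary convention), and let the coarse vector e_H = (e_2, e_4, …, e_{N-2}). With linear interpolation (I_H^h e_H)_{2i} = e_{2i} and (I_H^h e_H)_{2i+1} = (e_{2i} + e_{2i+2})/2, one has Σ_{i=0}^{N/2-1} (e_{2i+1} - ½e_{2i} - ½e_{2i+2})² ≤ Σ_{i=1}^{N-1} (e_i² - e_i e_{i+1}). -/
/-!
Summation by parts turns the right-hand side into half the discrete Dirichlet energy
`∑ (e (i+1) - e i)²` (the boundary terms vanish since `e 0 = e N = 0`). Grouping the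
differences in consecutive pairs, each pair dominates twice the corresponding interpolation
error, because `b - a/2 - c/2 = ((b - a) - (c - b)) / 2` and `(x - y)² ≤ 2 (x² + y²)`.
-/

open Finset

lemma two_mul_sum_range_sq_sub_mul {R : Type*} [CommRing R] (f : ℕ → R) (n : ℕ) :
    2 * ∑ i ∈ range n, (f i ^ 2 - f i * f (i + 1))
      = ∑ i ∈ range n, (f (i + 1) - f i) ^ 2 + f 0 ^ 2 - f n ^ 2 := by
  induction n with
  | zero => simp
  | succ n ih =>
    rw [sum_range_succ, sum_range_succ, mul_add, ih]
    ring

lemma sum_range_two_mul {M : Type*} [AddCommMonoid M] (g : ℕ → M) (m : ℕ) :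
    ∑ i ∈ range (2 * m), g i = ∑ j ∈ range m, (g (2 * j) + g (2 * j + 1)) := by
  induction m with
  | zero => simp
  | succ m ih =>
    rw [Nat.mul_succ, sum_range_succ, sum_range_succ, ih, sum_range_succ, add_assoc]

lemma sum_Icc_one_sub_one_eq_sum_range {M : Type*} [AddCommMonoid M] (f : ℕ → M)
    (hf : f 0 = 0) (n : ℕ) : ∑ i ∈ Icc 1 (n - 1), f i = ∑ i ∈ range n, f i := by
  refine sum_subset (fun i hi => ?_) (fun i hin hi => ?_)
  · simp only [mem_Icc, mem_range] at hi ⊢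
    omega
  · obtain rfl : i = 0 := by
      simp only [mem_Icc, mem_range] at hin hi
      omega
    exact hf

lemma two_mul_sq_sub_midpoint_le {K : Type*} [Field K] [LinearOrder K] [IsStrictOrderedRing K]
    (a b c : K) : 2 * (b - a / 2 - c / 2) ^ 2 ≤ (b - a) ^ 2 + (c - b) ^ 2 := by
  nlinarith [sq_nonneg (c - a)]

theorem stmt13_general (N : ℕ) (hEven : Even N) (e : ℕ → ℝ)
    (h0 : e 0 = 0) (hN0 : e N = 0) :
    ∑ i ∈ Finset.range (N / 2), (e (2 * i + 1) - e (2 * i) / 2 - e (2 * i + 2) / 2) ^ 2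
      ≤ ∑ i ∈ Finset.Icc 1 (N - 1), ((e i) ^ 2 - e i * e (i + 1)) := by
  obtain ⟨M, rfl⟩ := hEven
  rw [← two_mul] at hN0 ⊢
  rw [Nat.mul_div_cancel_left M two_pos, sum_Icc_one_sub_one_eq_sum_range _ (by simp [h0])]
  have energy := two_mul_sum_range_sq_sub_mul e (2 * M)
  rw [h0, hN0, sum_range_two_mul fun i => (e (i + 1) - e i) ^ 2] at energy
  have pairs := sum_le_sum fun j (_ : j ∈ range M) =>
    two_mul_sq_sub_midpoint_le (e (2 * j)) (e (2 * j + 1)) (e (2 * j + 2))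
  rw [← mul_sum] at pairs
  linarith

theorem stmt13 (N : ℕ) (hN : 0 < N) (hEven : Even N) (e : ℕ → ℝ)
    (h0 : e 0 = 0) (hN0 : e N = 0) :
    ∑ i ∈ Finset.range (N / 2), (e (2 * i + 1) - e (2 * i) / 2 - e (2 * i + 2) / 2) ^ 2
      ≤ ∑ i ∈ Finset.Icc 1 (N - 1), ((e i) ^ 2 - e i * e (i + 1)) :=
  stmt13_general N hEven e h0 hN0
end
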